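/- Let Ω be a Hausdorff space, let P and Q₁ ≤ Q₂ ≤ … be inner regular Borel measures on Ω with Qₙ(B) increasing to P(B) for every Borel set B. Let A := supp P and B := ⋃ₙ supp Qₙ. Then B ⊆ A and P(A \ B) = 0. -/

import Mathlib

/-!
Inner regularity makes each `Qₙ` vanish off its (closed) support, hence on the complement of
`⋃ₙ supp Qₙ`; this complement is Borel, so its `P`-measure is the limit of zeros.
-/

open MeasureTheory Filter

/-- The support of a measure on a topological space: the complement of the union of all open
null sets. -/
def msupport {Ω : Type*} [TopologicalSpace Ω] [MeasurableSpace Ω]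
    (μ : Measure Ω) : Set Ω :=
  (⋃₀ {O : Set Ω | IsOpen O ∧ μ O = 0})ᶜ

section

variable {Ω : Type*} [TopologicalSpace Ω] [MeasurableSpace Ω]

lemma msupport_eq_support (μ : Measure Ω) : msupport μ = μ.support := by
  rw [msupport, ← Measure.compl_support_eq_sUnion, compl_compl]

lemma measure_compl_iUnion_support_eq_zero [OpensMeasurableSpace Ω] {ι : Type*}
    (μ : ι → Measure Ω) [∀ i, (μ i).InnerRegular] (i : ι) :
    μ i (⋃ j, (μ j).support)ᶜ = 0 :=
  measure_mono_null (Set.compl_subset_compl.mpr (Set.subset_iUnion _ i))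
    Measure.measure_compl_support_of_innerRegular

end

theorem msupport_of_monotone_approximation_general {Ω : Type*} [TopologicalSpace Ω]
    [MeasurableSpace Ω] [BorelSpace Ω]
    (P : Measure Ω) (Q : ℕ → Measure Ω)
    (hQreg : ∀ n, (Q n).InnerRegular)
    (hle : ∀ n, Q n ≤ P)
    (hlim : ∀ B : Set Ω, MeasurableSet B →
      Tendsto (fun n => Q n B) atTop (nhds (P B))) :
    (⋃ n, msupport (Q n)) ⊆ msupport P ∧
      P (msupport P \ ⋃ n, msupport (Q n)) = 0 := by
  simp only [msupport_eq_support]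
  refine ⟨Set.iUnion_subset fun n => Measure.support_mono (hle n),
    measure_mono_null (Set.sdiff_subset_compl _ _) ?_⟩
  set N := (⋃ n, (Q n).support)ᶜ
  have hN : MeasurableSet N :=
    (MeasurableSet.iUnion fun n => Measure.isClosed_support.measurableSet).compl
  have hQN : (fun n => Q n N) = fun _ => 0 :=
    funext (measure_compl_iUnion_support_eq_zero Q)
  exact tendsto_nhds_unique (hQN ▸ hlim N hN) tendsto_const_nhds

/-- If `Qₙ ↑ P` for inner regular Borel measures on a Hausdorff space, then the
union `B` of the supports of the `Qₙ` is contained in the support `A` of `P` and `P(A \ B) = 0`. -/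
theorem msupport_of_monotone_approximation {Ω : Type*} [TopologicalSpace Ω] [T2Space Ω]
    [MeasurableSpace Ω] [BorelSpace Ω]
    (P : Measure Ω) (Q : ℕ → Measure Ω)
    (hPreg : P.InnerRegular) (hQreg : ∀ n, (Q n).InnerRegular)
    (hmono : Monotone Q) (hle : ∀ n, Q n ≤ P)
    (hlim : ∀ B : Set Ω, MeasurableSet B →
      Tendsto (fun n => Q n B) atTop (nhds (P B))) :
    (⋃ n, msupport (Q n)) ⊆ msupport P ∧
      P (msupport P \ ⋃ n, msupport (Q n)) = 0 :=
  msupport_of_monotone_approximation_general P Q hQreg hle hlim
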